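/- Let C ⊆ Z_2^α × Z_4^β be a Z_2Z_4-additive code of type (α,β;γ,δ;κ) with minimum Hamming distance d of its Gray image (or Lee distance). Then (d-1)/2 ≤ α/2 + β - γ/2 - δ. -/

import Mathlib

/-!
The Gray map is injective, so `φ(C)` is a binary code of length `α + 2β` with `2^(γ+2δ)` words
and minimum distance `d`. The classical Singleton bound `2^(γ+2δ) ≤ 2^(α+2β-(d-1))` rearranges to
the claim.
-/

/-- The quaternary Gray map `φ₄`. -/
def phi4 (x : ZMod 4) : ZMod 2 × ZMod 2 :=
  match x.val with
  | 0 => (0, 0)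
  | 1 => (0, 1)
  | 2 => (1, 1)
  | _ => (1, 0)

/-- The Gray map `φ : Z₂^α × Z₄^β → Z₂^(α+2β)`. -/
def grayMap {α β : ℕ} (u : (Fin α → ZMod 2) × (Fin β → ZMod 4)) :
    (Fin α ⊕ Fin β ⊕ Fin β) → ZMod 2 :=
  fun i => match i with
  | Sum.inl i => u.1 i
  | Sum.inr (Sum.inl j) => (phi4 (u.2 j)).1
  | Sum.inr (Sum.inr j) => (phi4 (u.2 j)).2

section SingletonBound

variable {ι A : Type*} [Fintype ι] [DecidableEq A]

theorem hammingDist_le_card_of_eqOn_compl {u v : ι → A} {D : Finset ι}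
    (h : ∀ i ∉ D, u i = v i) : hammingDist u v ≤ D.card :=
  Finset.card_le_card fun i hi => by
    by_contra hiD
    exact (Finset.mem_filter.mp hi).2 (h i hiD)

theorem ncard_le_card_pow_of_le_hammingDist [Fintype A] {C : Set (ι → A)} {d : ℕ}
    (hd : ∀ u ∈ C, ∀ v ∈ C, u ≠ v → d ≤ hammingDist u v) :
    C.ncard ≤ Fintype.card A ^ (Fintype.card ι - (d - 1)) := by
  classical
  -- Deleting `d - 1` coordinates is injective on a code of minimum distance `d`.
  obtain ⟨D, -, hD⟩ := Finset.exists_subset_card_eq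
    (min_le_right (d - 1) (Finset.univ : Finset ι).card)
  have hinj : Function.Injective fun u : C => fun i : ↥Dᶜ => u.1 i := by
    rintro ⟨u, hu⟩ ⟨v, hv⟩ huv
    rw [Subtype.mk.injEq]
    by_contra hne
    have hpos := hammingDist_pos.mpr hne
    have hle : hammingDist u v ≤ D.card :=
      hammingDist_le_card_of_eqOn_compl fun i hi => congrFun huv ⟨i, Finset.mem_compl.mpr hi⟩
    have := hd u hu v hv hne
    omega
  calc C.ncard = Nat.card C := (Nat.card_coe_set_eq C).symm
    _ ≤ Nat.card (↥Dᶜ → A) := Nat.card_le_card_of_injective _ hinj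
    _ = Fintype.card A ^ (Fintype.card ι - (d - 1)) := by
      rw [Nat.card_eq_fintype_card, Fintype.card_fun, Fintype.card_coe, Finset.card_compl, hD,
        Finset.card_univ]
      congr 1
      omega

end SingletonBound

theorem phi4_injective : Function.Injective phi4 := by decide

theorem grayMap_injective {α β : ℕ} : Function.Injective (grayMap (α := α) (β := β)) := by
  intro u v h
  refine Prod.ext (funext fun i => congrFun h (.inl i)) (funext fun j => phi4_injective ?_)
  exact Prod.ext (congrFun h (.inr (.inl j))) (congrFun h (.inr (.inr j)))

theorem card_grayMap_index (α β : ℕ) : Fintype.card (Fin α ⊕ Fin β ⊕ Fin β) = α + 2 * β := by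
  simp only [Fintype.card_sum, Fintype.card_fin]
  ring

theorem card_Z2Z4 (γ δ : ℕ) :
    Nat.card ((Fin γ → ZMod 2) × (Fin δ → ZMod 4)) = 2 ^ (γ + 2 * δ) := by
  simp [Nat.card_eq_fintype_card, pow_add, pow_mul]

theorem singleton_bound_Z2Z4 (α β γ δ : ℕ) (d : ℕ)
    (C : AddSubgroup ((Fin α → ZMod 2) × (Fin β → ZMod 4)))
    (htype : Nonempty (C ≃+ (Fin γ → ZMod 2) × (Fin δ → ZMod 4)))
    (hd : IsLeast {n : ℕ | ∃ u ∈ C, ∃ v ∈ C, grayMap u ≠ grayMap v ∧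
        n = hammingDist (grayMap u) (grayMap v)} d) :
    ((d : ℚ) - 1) / 2 ≤ (α : ℚ) / 2 + β - (γ : ℚ) / 2 - δ := by
  obtain ⟨⟨u, -, v, -, -, hdu⟩, hmin⟩ := hd
  have hdn : d ≤ α + 2 * β := hdu ▸ card_grayMap_index α β ▸ hammingDist_le_card_fintype
  have hcard : (grayMap '' SetLike.coe C).ncard = 2 ^ (γ + 2 * δ) := by
    rw [Set.ncard_image_of_injective _ grayMap_injective, ← Nat.card_coe_set_eq, ← card_Z2Z4]
    exact Nat.card_congr htype.some.toEquiv
  have hdist : ∀ x ∈ grayMap '' SetLike.coe C, ∀ y ∈ grayMap '' SetLike.coe C, x ≠ y →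
      d ≤ hammingDist x y := by
    rintro _ ⟨x, hx, rfl⟩ _ ⟨y, hy, rfl⟩ hxy
    exact hmin ⟨x, hx, y, hy, hxy, rfl⟩
  have hsingleton := ncard_le_card_pow_of_le_hammingDist hdist
  rw [hcard, card_grayMap_index, ZMod.card, Nat.pow_le_pow_iff_right one_lt_two] at hsingleton
  have hexp : (γ : ℚ) + 2 * δ + d ≤ α + 2 * β + 1 := by
    exact_mod_cast (by omega : γ + 2 * δ + d ≤ α + 2 * β + 1)
  linarith
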